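/- arXiv:1408.3208 — 9 statements merged into one kernel-verified Lean document; each statement's English description precedes it below -/
import Mathlib

section
/- Let s ≥ 2 be an integer, q_0 = 0, q_{n+1} = (q_n^s + s - 1)/s, and p_n = 1 - q_n. Then n · p_n → 2/(s-1) as n → ∞. -/
/-!
With `p = 1 - q` the recursion becomes `p (n + 1) = (1 - (1 - p n) ^ s) / s`. By Bernoulli's
inequality this map sends `(0, 1]` into itself and moves every point strictly down, so `p n ↓ 0`.
Expanding `(1 - x) ^ s = 1 - s x + C(s, 2) x² + O(x³)` gives
`1 / p (n + 1) - 1 / p n → (s - 1) / 2`, and by Cesàro averaging `1 / (n p n) → (s - 1) / 2`.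
-/

open Filter Topology Set Function

theorem tendsto_natCast_mul_of_tendsto_inv_sub_inv {p : ℕ → ℝ} {c : ℝ} (hc : c ≠ 0)
    (h : Tendsto (fun n => (p (n + 1))⁻¹ - (p n)⁻¹) atTop (𝓝 c)) :
    Tendsto (fun n : ℕ => n * p n) atTop (𝓝 c⁻¹) := by
  have hmean : Tendsto (fun n : ℕ => ((p n)⁻¹ - (p 0)⁻¹) / n) atTop (𝓝 c) := by
    refine h.cesaro.congr fun n => ?_
    rw [Finset.sum_range_sub (fun i => (p i)⁻¹), inv_mul_eq_div]
  have hinv : Tendsto (fun n : ℕ => (p n)⁻¹ / n) atTop (𝓝 c) := by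
    simpa [sub_div] using hmean.add (tendsto_const_div_atTop_nhds_zero_nat (p 0)⁻¹)
  simpa [div_eq_mul_inv, mul_comm] using hinv.inv₀ hc

theorem tendsto_iterate_nhdsGT_zero {f : ℝ → ℝ} {a : ℝ} (hf : Continuous f)
    (hmaps : MapsTo f (Ioc 0 a) (Ioc 0 a)) (hlt : ∀ x ∈ Ioc 0 a, f x < x)
    {x : ℝ} (hx : x ∈ Ioc 0 a) :
    Tendsto (fun n => f^[n] x) atTop (𝓝[>] 0) := by
  have hmem : ∀ n, f^[n] x ∈ Ioc 0 a := fun n => hmaps.iterate n hx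
  have hanti : Antitone fun n => f^[n] x := antitone_nat_of_succ_le fun n => by
    rw [iterate_succ_apply']; exact (hlt _ (hmem n)).le
  have hbdd : BddBelow (range fun n => f^[n] x) := ⟨0, by rintro _ ⟨n, rfl⟩; exact (hmem n).1.le⟩
  set L := ⨅ n, f^[n] x
  have hL : Tendsto (fun n => f^[n] x) atTop (𝓝 L) := tendsto_atTop_ciInf hanti hbdd
  have hL0 : L = 0 := by
    have hfix : f L = L := isFixedPt_of_tendsto_iterate hL hf.continuousAt
    have hLa : L ≤ a := (ciInf_le hbdd 0).trans (hmem 0).2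
    by_contra hne
    have hLpos : 0 < L := lt_of_le_of_ne (le_ciInf fun n => (hmem n).1.le) (Ne.symm hne)
    exact (hlt L ⟨hLpos, hLa⟩).ne hfix
  rw [hL0] at hL
  exact tendsto_nhdsWithin_of_tendsto_nhds_of_eventually_within _ hL
    (Eventually.of_forall fun n => (hmem n).1)

noncomputable def binomTail (s : ℕ) (x : ℝ) : ℝ :=
  ∑ j ∈ Finset.range (s - 1), (-x) ^ j * s.choose (j + 2)

theorem one_sub_pow_eq_binomTail (s : ℕ) (x : ℝ) :
    (1 - x) ^ s = 1 - s * x + x ^ 2 * binomTail s x := by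
  match s with
  | 0 => simp [binomTail]
  | 1 => simp [binomTail]
  | m + 2 =>
    rw [sub_eq_neg_add, add_pow, Finset.sum_range_succ', Finset.sum_range_succ', binomTail,
      Finset.mul_sum]
    simp only [zero_add, one_pow, mul_one, pow_zero, Nat.choose_zero_right, Nat.choose_one_right]
    push_cast
    ring_nf

theorem binomTail_zero (s : ℕ) : binomTail s 0 = s.choose 2 := by
  rcases Nat.lt_or_ge s 2 with hs | hs
  · interval_cases s <;> simp [binomTail]
  · rw [binomTail, Finset.sum_eq_single_of_mem 0 (by simp; omega)]
    · simp
    · intro j _ hj; simp [hj]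

theorem continuous_binomTail (s : ℕ) : Continuous (binomTail s) := by
  unfold binomTail; fun_prop

noncomputable def hitMap (s : ℕ) (x : ℝ) : ℝ := (1 - (1 - x) ^ s) / s

theorem continuous_hitMap (s : ℕ) : Continuous (hitMap s) := by
  unfold hitMap; fun_prop

theorem hitMap_pos {s : ℕ} (hs : s ≠ 0) {x : ℝ} (hx : x ∈ Ioc 0 1) : 0 < hitMap s x := by
  have : (1 - x) ^ s < 1 := pow_lt_one₀ (by linarith [hx.2]) (by linarith [hx.1]) hs
  unfold hitMap
  exact div_pos (by linarith) (by positivity)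

theorem hitMap_lt_self {s : ℕ} (hs : 2 ≤ s) {x : ℝ} (hx0 : x ≠ 0) (hx1 : x ≤ 1) :
    hitMap s x < x := by
  have h := one_add_mul_self_lt_rpow_one_add (s := -x) (by linarith) (neg_ne_zero.2 hx0)
    (p := s) (by exact_mod_cast hs)
  rw [Real.rpow_natCast, ← sub_eq_add_neg] at h
  rw [hitMap, div_lt_iff₀ (by positivity)]
  linarith

theorem mapsTo_hitMap {s : ℕ} (hs : 2 ≤ s) : MapsTo (hitMap s) (Ioc 0 1) (Ioc 0 1) :=
  fun x hx => ⟨hitMap_pos (by omega) hx, (hitMap_lt_self hs hx.1.ne' hx.2).le.trans hx.2⟩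

theorem hitMap_eq_mul {s : ℕ} (hs : s ≠ 0) (x : ℝ) :
    hitMap s x = x * (s - x * binomTail s x) / s := by
  rw [hitMap, one_sub_pow_eq_binomTail]
  field_simp
  ring

theorem inv_hitMap_sub_inv {s : ℕ} (hs : s ≠ 0) {x : ℝ} (hx0 : x ≠ 0)
    (hx : s - x * binomTail s x ≠ 0) :
    (hitMap s x)⁻¹ - x⁻¹ = binomTail s x / (s - x * binomTail s x) := by
  rw [hitMap_eq_mul hs]
  field_simp
  ring

theorem tendsto_inv_hitMap_sub_inv {s : ℕ} (hs : s ≠ 0) :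
    Tendsto (fun x => (hitMap s x)⁻¹ - x⁻¹) (𝓝[≠] 0) (𝓝 (((s : ℝ) - 1) / 2)) := by
  have hs' : (s : ℝ) ≠ 0 := by exact_mod_cast hs
  have hB := continuous_binomTail s
  have hcont : ContinuousAt (fun x => binomTail s x / (s - x * binomTail s x)) 0 :=
    hB.continuousAt.div (by fun_prop) (by simpa using hs')
  have hlim : Tendsto (fun x => binomTail s x / (s - x * binomTail s x)) (𝓝 0)
      (𝓝 (((s : ℝ) - 1) / 2)) := by
    convert hcont.tendsto using 2
    simp only [binomTail_zero, Nat.cast_choose_two, zero_mul, sub_zero]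
    field_simp
  have hne : ∀ᶠ x in 𝓝 (0 : ℝ), (s : ℝ) - x * binomTail s x ≠ 0 :=
    (continuous_const.sub (continuous_id.mul hB)).continuousAt.eventually_ne (by simpa using hs')
  refine (hlim.mono_left nhdsWithin_le_nhds).congr' ?_
  filter_upwards [nhdsWithin_le_nhds hne, self_mem_nhdsWithin] with x hx (hx0 : x ≠ 0)
  exact (inv_hitMap_sub_inv hs hx0 hx).symm

theorem stmt_2 (s : ℕ) (hs : 2 ≤ s) (q : ℕ → ℝ)
    (hq0 : q 0 = 0) (hqrec : ∀ n, q (n+1) = (q n ^ s + s - 1) / s) :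
    Filter.Tendsto (fun n : ℕ => (n : ℝ) * (1 - q n)) Filter.atTop
      (nhds (2 / ((s : ℝ) - 1))) := by
  have hs0 : s ≠ 0 := by omega
  have hp : ∀ n, 1 - q n = (hitMap s)^[n] 1 := by
    intro n
    induction n with
    | zero => simp [hq0]
    | succ n ih =>
      rw [iterate_succ_apply', ← ih, hqrec, hitMap, sub_sub_cancel]
      field_simp
      ring
  have hp0 : Tendsto (fun n => (hitMap s)^[n] 1) atTop (𝓝[≠] 0) :=
    tendsto_nhdsWithin_mono_right (fun x hx => ne_of_gt hx)
      (tendsto_iterate_nhdsGT_zero (continuous_hitMap s) (mapsTo_hitMap hs)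
        (fun x hx => hitMap_lt_self hs hx.1.ne' hx.2) ⟨one_pos, le_rfl⟩)
  have hdiff : Tendsto (fun n => ((hitMap s)^[n + 1] 1)⁻¹ - ((hitMap s)^[n] 1)⁻¹) atTop
      (𝓝 (((s : ℝ) - 1) / 2)) := by
    simpa only [iterate_succ_apply', comp_def] using (tendsto_inv_hitMap_sub_inv hs0).comp hp0
  have hs1 : ((s : ℝ) - 1) / 2 ≠ 0 := by
    have : (2 : ℝ) ≤ s := by exact_mod_cast hs
    linarith
  simp only [hp]
  rw [← inv_div]
  exact tendsto_natCast_mul_of_tendsto_inv_sub_inv hs1 hdiff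
end

section
/- Let s ≥ 2 be an integer and let (a_n) be positive reals with a_0 > 0 and (1 + a_{n+1})^s = s·a_n + 1 for all n. Then n·a_n → 2/(s-1) as n → ∞. -/
open Filter Finset Topology

theorem stmt_5 (s : ℕ) (hs : 2 ≤ s) (a : ℕ → ℝ)
    (hpos : ∀ n, 0 < a n)
    (hrec : ∀ n, (1 + a (n+1)) ^ s = (s : ℝ) * a n + 1) :
    Filter.Tendsto (fun n : ℕ => (n : ℝ) * a n) Filter.atTop
      (nhds (2 / ((s : ℝ) - 1))) := by
  obtain ⟨t, rfl⟩ : ∃ t, s = t + 2 := ⟨s - 2, by omega⟩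
  set P : ℝ → ℝ := fun x => ∑ j ∈ range (t+1), ((t+2).choose (j+2) : ℝ) * x^j with hPdef
  set Q : ℝ → ℝ := fun x => ∑ j ∈ range (t+2), ((t+2).choose (j+1) : ℝ) * x^j with hQdef
  have hA : ∀ x : ℝ, (1 + x) ^ (t+2) = 1 + x * Q x := by
    intro x
    rw [add_comm (1:ℝ) x, add_pow]
    simp only [one_pow, mul_one]
    rw [Finset.sum_range_succ']
    simp only [pow_zero, Nat.choose_zero_right, Nat.cast_one, one_mul]
    rw [add_comm, hQdef, Finset.mul_sum]
    congr 1
    exact Finset.sum_congr rfl fun j _ => by ring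
  have hB : ∀ x : ℝ, Q x = ((t:ℝ)+2) + x * P x := by
    intro x
    have h := Finset.sum_range_succ' (fun j => ((t+2).choose (j+1) : ℝ) * x^j) (t+1)
    have h2 : ∀ j ∈ range (t+1), ((t+2).choose (j+1+1) : ℝ) * x^(j+1)
        = x * (((t+2).choose (j+2) : ℝ) * x^j) := by
      intro j _
      rw [show j+1+1 = j+2 from rfl]
      ring
    rw [Finset.sum_congr rfl h2, ← Finset.mul_sum] at h
    rw [hQdef]
    simp only
    rw [h, hPdef]
    simp only [pow_zero, mul_one, zero_add, Nat.choose_one_right]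
    push_cast
    ring
  have hPpos : ∀ x : ℝ, 0 ≤ x → 0 < P x := by
    intro x hx
    have h0 : (0:ℕ) ∈ range (t+1) := by simp
    have hle : ((t+2).choose 2 : ℝ) * x^0 ≤ P x :=
      Finset.single_le_sum (f := fun j => ((t+2).choose (j+2) : ℝ) * x^j)
        (fun j _ => by positivity) h0
    have : (0:ℝ) < ((t+2).choose 2 : ℝ) * x^0 := by
      have := Nat.choose_pos (show 2 ≤ t+2 by omega)
      positivity
    linarith
  have hQpos : ∀ x : ℝ, 0 ≤ x → 0 < Q x := by
    intro x hx
    have := hPpos x hx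
    rw [hB]
    nlinarith
  have hPcont : Continuous P := by
    apply continuous_finset_sum
    intro j _
    exact continuous_const.mul (continuous_pow j)
  have hQcont : Continuous Q := by
    apply continuous_finset_sum
    intro j _
    exact continuous_const.mul (continuous_pow j)
  have hP0 : P 0 = ((t+2).choose 2 : ℝ) := by
    rw [hPdef]
    simp only
    rw [Finset.sum_range_succ']
    simp [pow_succ]
  have hQ0 : Q 0 = (t:ℝ) + 2 := by
    have := hB 0
    simpa using this
  -- strict decrease
  have hdec : ∀ n, a (n+1) < a n := by
    intro n
    have hx := hpos n
    have hPx := hPpos (a n) hx.le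
    have h1 : (1 + a (n+1)) ^ (t+2) < (1 + a n) ^ (t+2) := by
      rw [hrec n, hA (a n), hB (a n)]
      push_cast
      nlinarith [mul_pos (mul_pos hx hx) hPx]
    have h2 : 1 + a (n+1) < 1 + a n := by
      refine lt_of_pow_lt_pow_left₀ (t+2) ?_ h1
      linarith [hpos n]
    linarith
  have hanti : StrictAnti a := strictAnti_nat_of_succ_lt hdec
  have hbdd : BddBelow (Set.range a) := ⟨0, by rintro x ⟨n, rfl⟩; exact (hpos n).le⟩
  -- a tends to 0
  have hlim0 : Tendsto a atTop (𝓝 0) := by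
    obtain ⟨L, hT⟩ : ∃ L, Tendsto a atTop (𝓝 L) :=
      ⟨_, tendsto_atTop_ciInf hanti.antitone hbdd⟩
    have hL0 : 0 ≤ L := ge_of_tendsto' hT fun n => (hpos n).le
    have hTs : Tendsto (fun n => a (n+1)) atTop (𝓝 L) := hT.comp (tendsto_add_atTop_nat 1)
    have h1 : Tendsto (fun n => (1 + a (n+1)) ^ (t+2)) atTop (𝓝 ((1+L)^(t+2))) :=
      (hTs.const_add 1).pow (t+2)
    have h3 : Tendsto (fun n => ((t+2:ℕ) : ℝ) * a n + 1) atTop (𝓝 (((t+2:ℕ):ℝ)*L + 1)) :=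
      (hT.const_mul _).add_const 1
    have heq : (1+L)^(t+2) = ((t+2:ℕ):ℝ)*L + 1 := by
      refine tendsto_nhds_unique ?_ h3
      simpa only [hrec] using h1
    have hLP : L * L * P L = 0 := by
      rw [hA L, hB L] at heq
      push_cast at heq
      nlinarith
    have hLz : L = 0 := by
      rcases eq_or_lt_of_le hL0 with h | h
      · exact h.symm
      · exfalso; have hp := hPpos L hL0
        nlinarith [mul_pos (mul_pos h h) hp]
    rwa [hLz] at hT
  -- difference of reciprocals
  set b : ℕ → ℝ := fun n => (a n)⁻¹ with hbdef
  set d : ℕ → ℝ := fun n => b (n+1) - b n with hddef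
  have hd : ∀ n, d n = P (a (n+1)) / Q (a (n+1)) := by
    intro n
    set x := a (n+1) with hxdef
    have hx : 0 < x := hpos (n+1)
    have hQx : 0 < Q x := hQpos x hx.le
    have han : ((t+2:ℕ):ℝ) * a n = x * Q x := by
      have := hrec n
      rw [hA x] at this
      linarith
    have hanv : a n = x * Q x / ((t:ℝ)+2) := by
      push_cast at han
      field_simp
      linarith
    have hbn : b n = ((t:ℝ)+2) / (x * Q x) := by
      rw [hbdef]
      simp only
      rw [hanv, inv_div]
    have hQs : Q x - ((t:ℝ)+2) = x * P x := by
      rw [hB x]; ring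
    rw [hddef]
    simp only
    rw [hbn, hbdef]
    simp only
    rw [← hxdef]
    field_simp
    nlinarith [hQs]
  -- limit of d
  have hlimshift : Tendsto (fun n => a (n+1)) atTop (𝓝 0) := hlim0.comp (tendsto_add_atTop_nat 1)
  have hQ0ne : Q 0 ≠ 0 := by rw [hQ0]; positivity
  have hdlim : Tendsto d atTop (𝓝 (P 0 / Q 0)) := by
    have h1 : Tendsto (fun n => P (a (n+1))) atTop (𝓝 (P 0)) :=
      (hPcont.tendsto 0).comp hlimshift
    have h2 : Tendsto (fun n => Q (a (n+1))) atTop (𝓝 (Q 0)) :=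
      (hQcont.tendsto 0).comp hlimshift
    exact Tendsto.congr (fun n => (hd n).symm) (h1.div h2 hQ0ne)
  -- Cesàro
  have hsum : ∀ n, ∑ i ∈ range n, d i = b n - b 0 := fun n => Finset.sum_range_sub b n
  have hc2 : Tendsto (fun n : ℕ => ((n:ℝ))⁻¹ * (b n - b 0)) atTop (𝓝 (P 0 / Q 0)) := by
    simpa only [hsum] using hdlim.cesaro
  have hc3 : Tendsto (fun n : ℕ => ((n:ℝ))⁻¹ * b 0) atTop (𝓝 0) := by
    simpa [div_eq_inv_mul] using tendsto_const_div_atTop_nhds_zero_nat (b 0)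
  have hc4 : Tendsto (fun n : ℕ => b n / n) atTop (𝓝 (P 0 / Q 0)) := by
    have h := hc2.add hc3
    rw [add_zero] at h
    refine h.congr fun n => ?_
    rw [div_eq_inv_mul]
    ring
  have hLne : P 0 / Q 0 ≠ 0 := by
    have := hPpos 0 le_rfl
    have := hQpos 0 le_rfl
    positivity
  have hc5 : Tendsto (fun n : ℕ => (b n / n)⁻¹) atTop (𝓝 ((P 0 / Q 0)⁻¹)) := hc4.inv₀ hLne
  have hfun : (fun n : ℕ => ((n:ℝ)) * a n) = fun n : ℕ => (b n / n)⁻¹ := by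
    funext n
    rw [hbdef]
    simp only
    rw [inv_div, div_eq_mul_inv, inv_inv, mul_comm]
  have hval : (P 0 / Q 0)⁻¹ = 2 / (((t+2:ℕ):ℝ) - 1) := by
    rw [hP0, hQ0]
    have hdvd : 2 ∣ (t+2)*(t+1) := by
      have := Nat.even_mul_succ_self (t+1)
      rw [mul_comm] at this
      exact this.two_dvd
    have h2 : 2 * (t+2).choose 2 = (t+2)*(t+1) := by
      rw [Nat.choose_two_right, show t+2-1 = t+1 from rfl]
      exact Nat.mul_div_cancel' hdvd
    have h2' : ((t+2).choose 2 : ℝ) = ((t:ℝ)+2)*((t:ℝ)+1)/2 := by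
      have : ((2 * (t+2).choose 2 : ℕ) : ℝ) = (((t+2)*(t+1) : ℕ) : ℝ) := by rw [h2]
      push_cast at this
      linarith
    rw [h2']
    push_cast
    rw [inv_div]
    rw [div_div_eq_mul_div]
    rw [div_eq_div_iff (by nlinarith) (by nlinarith)]
    ring
  rw [hfun, ← hval]
  exact hc5
end

section
/- Let s ≥ 2 be an integer and let (a_n) be positive reals with a_0 > 0, (1+a_{n+1})^s = s·a_n + 1 for all n. Then a_n/a_{n+1} → 1 as n → ∞. -/
/-!
By Bernoulli's inequality `s a_{n+1} ≤ (1 + a_{n+1})^s - 1 = s a_n`, so the sequence decreases to a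
limit `L ≥ 0` with `(1 + L)^s = s L + 1`, and the strict Bernoulli inequality forces `L = 0`.
Then `a_n / a_{n+1} = ((1 + a_{n+1})^s - 1) / (s a_{n+1})` is a difference quotient of
`x ↦ (1 + x)^s` at `0` divided by `s`, hence tends to `s / s = 1`.
-/

open Filter Topology

lemma one_add_mul_lt_pow_of_two_le {s : ℕ} (hs : 2 ≤ s) {x : ℝ} (hx : -1 ≤ x) (hx0 : x ≠ 0) :
    1 + s * x < (1 + x) ^ s := by
  have h := one_add_mul_self_lt_rpow_one_add hx hx0 (p := s) (by exact_mod_cast hs)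
  rwa [Real.rpow_natCast] at h

lemma tendsto_one_add_pow_sub_one_div_nhdsNE_zero (s : ℕ) :
    Tendsto (fun x : ℝ => ((1 + x) ^ s - 1) / x) (𝓝[≠] 0) (𝓝 s) := by
  have hder : HasDerivAt (fun x : ℝ => (1 + x) ^ s) (s : ℝ) 0 := by
    simpa using ((hasDerivAt_id (0 : ℝ)).const_add 1).fun_pow s
  refine (hasDerivAt_iff_tendsto_slope.1 hder).congr fun x => ?_
  simp [slope_def_field]

lemma antitone_of_one_add_pow_eq {s : ℕ} (hs : 0 < s) {a : ℕ → ℝ} (hnonneg : ∀ n, 0 ≤ a n)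
    (hrec : ∀ n, (1 + a (n + 1)) ^ s = s * a n + 1) : Antitone a := by
  refine antitone_nat_of_succ_le fun n => ?_
  have hbern := one_add_mul_le_pow (by linarith [hnonneg (n + 1)] : (-2 : ℝ) ≤ a (n + 1)) s
  rw [hrec n] at hbern
  exact le_of_mul_le_mul_left (by linarith) (by exact_mod_cast hs : (0 : ℝ) < s)

lemma tendsto_zero_of_one_add_pow_eq {s : ℕ} (hs : 2 ≤ s) {a : ℕ → ℝ} (hnonneg : ∀ n, 0 ≤ a n)
    (hrec : ∀ n, (1 + a (n + 1)) ^ s = s * a n + 1) : Tendsto a atTop (𝓝 0) := by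
  set L := ⨅ n, a n
  have hlim : Tendsto a atTop (𝓝 L) :=
    tendsto_atTop_ciInf (antitone_of_one_add_pow_eq (by omega) hnonneg hrec)
      ⟨0, by rintro _ ⟨n, rfl⟩; exact hnonneg n⟩
  have hL : (1 + L) ^ s = s * L + 1 := by
    have hlhs := ((hlim.comp (tendsto_add_atTop_nat 1)).const_add 1).pow s
    rw [show (fun n => (1 + (a ∘ (· + 1)) n) ^ s) = fun n => s * a n + 1 from funext hrec] at hlhs
    exact tendsto_nhds_unique hlhs ((hlim.const_mul _).add_const 1)
  suffices L = 0 by rwa [this] at hlim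
  by_contra hL0
  have hL_nonneg : 0 ≤ L := le_ciInf hnonneg
  linarith [one_add_mul_lt_pow_of_two_le hs (by linarith) hL0]

theorem stmt_6 (s : ℕ) (hs : 2 ≤ s) (a : ℕ → ℝ)
    (hpos : ∀ n, 0 < a n)
    (hrec : ∀ n, (1 + a (n+1)) ^ s = (s : ℝ) * a n + 1) :
    Filter.Tendsto (fun n : ℕ => a n / a (n+1)) Filter.atTop (nhds 1) := by
  have hs0 : (s : ℝ) ≠ 0 := by norm_cast; omega
  have hnext : Tendsto (fun n => a (n + 1)) atTop (𝓝[≠] 0) :=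
    tendsto_nhdsWithin_iff.2
      ⟨(tendsto_zero_of_one_add_pow_eq hs (fun n => (hpos n).le) hrec).comp
        (tendsto_add_atTop_nat 1), Eventually.of_forall fun n => (hpos (n + 1)).ne'⟩
  have hquot := ((tendsto_one_add_pow_sub_one_div_nhdsNE_zero s).comp hnext).div_const (s : ℝ)
  rw [div_self hs0] at hquot
  refine hquot.congr fun n => ?_
  have := (hpos (n + 1)).ne'
  simp only [Function.comp_apply, hrec n, add_sub_cancel_right]
  field_simp
end

section
/- Let s ≥ 2 be an integer and define r_0(h) = e^h, r_{n+1}(h) = (r_n(h)^s + s - 1)/s. Then the annealed free energy F(h) := lim_{n→∞} s^{-n} log r_n(h) exists for all h ∈ ℝ, and F(h) = 0 for h ≤ 0 while F(h) > 0 for h > 0. -/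
/-!
The map `T y = (y ^ s + s - 1) / s` satisfies `y ^ s / s ≤ T y ≤ max (y ^ s) 1`. Taking logarithms,
`s⁻ⁿ max (log rₙ) 0` is nonincreasing, while `s⁻ⁿ (log rₙ - L)` is nondecreasing because
`L = log s / (s - 1)` is the fixed point of `ℓ ↦ s ℓ - log s`. So the latter sequence is bounded,
hence converges, and it differs from `s⁻ⁿ log rₙ` by `s⁻ⁿ L → 0`.

For `h ≤ 0` the iterates stay in `[e ^ h, 1]`, so the limit is `0`. For `h > 0` the bound
`T y ≥ y + (y - 1) ^ 2 / s` forces `rₙ → ∞`; once `r_N > e ^ L`, the limit is at least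
`s⁻ᴺ (log r_N - L) > 0`.
-/

open Filter Real Topology

lemma one_add_mul_sub_add_sq_le_pow {R : Type*} [CommRing R] [LinearOrder R]
    [IsStrictOrderedRing R] {a : R} (ha : 1 ≤ a) {n : ℕ} (hn : 2 ≤ n) :
    1 + n * (a - 1) + (a - 1) ^ 2 ≤ a ^ n := by
  obtain ⟨k, rfl⟩ := Nat.exists_eq_add_of_le' hn
  have hk : 1 + k * (a - 1) ≤ a ^ k := one_add_mul_sub_le_pow (by linarith) k
  have hk0 : (0 : R) ≤ k * (a - 1) := mul_nonneg k.cast_nonneg (by linarith)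
  calc 1 + ((k + 2 : ℕ) : R) * (a - 1) + (a - 1) ^ 2
      ≤ (1 + k * (a - 1)) * a ^ 2 := by push_cast; nlinarith [mul_nonneg hk0 (sq_nonneg (a - 1))]
    _ ≤ a ^ k * a ^ 2 := by gcongr
    _ = a ^ (k + 2) := (pow_add a k 2).symm

noncomputable def pinningMap (s : ℕ) (x : ℝ) : ℝ := (x ^ s + s - 1) / s

section pinningMap

variable {s : ℕ} {y : ℝ}

lemma le_pinningMap (hs : 1 ≤ s) (hy : 0 ≤ y) : y ≤ pinningMap s y := by
  have hs' : (0 : ℝ) < s := by exact_mod_cast hs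
  have := one_add_mul_sub_le_pow (a := y) (by linarith) s
  rw [pinningMap, le_div_iff₀ hs']
  linarith

lemma pinningMap_le_one (hs : 1 ≤ s) (hy₀ : 0 ≤ y) (hy₁ : y ≤ 1) : pinningMap s y ≤ 1 := by
  have hs' : (0 : ℝ) < s := by exact_mod_cast hs
  rw [pinningMap, div_le_one hs']
  linarith [pow_le_one₀ hy₀ hy₁ (n := s)]

lemma pinningMap_le_pow (hs : 1 ≤ s) (hy : 1 ≤ y) : pinningMap s y ≤ y ^ s := by
  have hs' : (1 : ℝ) ≤ s := by exact_mod_cast hs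
  rw [pinningMap, div_le_iff₀ (by linarith)]
  nlinarith [one_le_pow₀ hy (n := s)]

lemma add_sq_div_le_pinningMap (hs : 2 ≤ s) (hy : 1 ≤ y) :
    y + (y - 1) ^ 2 / s ≤ pinningMap s y := by
  have hs' : (0 : ℝ) < s := by positivity
  rw [pinningMap, ← sub_nonneg]
  have key := one_add_mul_sub_add_sq_le_pow hy hs
  have : (y ^ s + s - 1) / s - (y + (y - 1) ^ 2 / s)
      = (y ^ s - (1 + s * (y - 1) + (y - 1) ^ 2)) / s := by
    field_simp; ring
  rw [this]
  exact div_nonneg (by linarith) hs'.le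

lemma mul_log_sub_log_le_log_pinningMap (hs : 1 ≤ s) (hy : 0 < y) :
    s * log y - log s ≤ log (pinningMap s y) := by
  have hs' : (1 : ℝ) ≤ s := by exact_mod_cast hs
  rw [← log_pow, ← log_div (by positivity) (by positivity)]
  exact log_le_log (by positivity) (div_le_div_of_nonneg_right (by linarith) (by linarith))

lemma log_pinningMap_le (hs : 1 ≤ s) (hy : 0 < y) :
    log (pinningMap s y) ≤ s * max (log y) 0 := by
  rcases le_total y 1 with hy₁ | hy₁
  · calc log (pinningMap s y) ≤ 0 :=
          log_nonpos ((le_pinningMap hs hy.le).trans' hy.le) (pinningMap_le_one hs hy.le hy₁)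
      _ ≤ s * max (log y) 0 := by positivity
  · calc log (pinningMap s y) ≤ log (y ^ s) :=
          log_le_log (hy.trans_le (le_pinningMap hs hy.le)) (pinningMap_le_pow hs hy₁)
      _ = s * log y := log_pow y s
      _ ≤ s * max (log y) 0 := by gcongr; exact le_max_left _ _

lemma le_iterate_pinningMap (hs : 1 ≤ s) (hy : 0 ≤ y) (n : ℕ) :
    y ≤ (pinningMap s)^[n] y := by
  induction n with
  | zero => rfl
  | succ n ih =>
    rw [Function.iterate_succ_apply']
    exact ih.trans (le_pinningMap hs (hy.trans ih))

lemma iterate_pinningMap_le_one (hs : 1 ≤ s) (hy₀ : 0 ≤ y) (hy₁ : y ≤ 1) (n : ℕ) :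
    (pinningMap s)^[n] y ≤ 1 := by
  induction n with
  | zero => exact hy₁
  | succ n ih =>
    rw [Function.iterate_succ_apply']
    exact pinningMap_le_one hs (hy₀.trans (le_iterate_pinningMap hs hy₀ n)) ih

lemma tendsto_iterate_pinningMap_atTop (hs : 2 ≤ s) (hy : 1 < y) :
    Tendsto (fun n ↦ (pinningMap s)^[n] y) atTop atTop := by
  set δ := (y - 1) ^ 2 / s with hδ_def
  have hδ : 0 < δ := by
    have : (0 : ℝ) < y - 1 := by linarith
    positivity
  have hlin : ∀ n : ℕ, y + n * δ ≤ (pinningMap s)^[n] y := by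
    intro n
    induction n with
    | zero => simp
    | succ n ih =>
      have hyn : y ≤ (pinningMap s)^[n] y := le_iterate_pinningMap (by omega) (by linarith) n
      have hstep : δ ≤ ((pinningMap s)^[n] y - 1) ^ 2 / s := by
        rw [hδ_def]
        gcongr
      rw [Function.iterate_succ_apply']
      push_cast
      linarith [add_sq_div_le_pinningMap hs (hy.le.trans hyn)]
  refine tendsto_atTop_mono hlin (tendsto_atTop_add_const_left _ _ ?_)
  exact tendsto_natCast_atTop_atTop.atTop_mul_const hδ

end pinningMap

-- The supremum of the nondecreasing sequence `s⁻ⁿ (log (Tⁿ y) - L)`; it is the limit of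
-- `s⁻ⁿ log (Tⁿ y)` by `tendsto_scaled_log_iterate`.
noncomputable def pinningLimit (s : ℕ) (y : ℝ) : ℝ :=
  ⨆ n : ℕ, ((s : ℝ) ^ n)⁻¹ * (log ((pinningMap s)^[n] y) - log s / (s - 1))

section scaledLog

variable {s : ℕ} {y : ℝ}

lemma antitone_scaled_max_log_iterate (hs : 1 ≤ s) (hy : 0 < y) :
    Antitone fun n : ℕ ↦ ((s : ℝ) ^ n)⁻¹ * max (log ((pinningMap s)^[n] y)) 0 := by
  have hs' : (0 : ℝ) < s := by exact_mod_cast hs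
  refine antitone_nat_of_succ_le fun n ↦ ?_
  set z := (pinningMap s)^[n] y
  have hz : 0 < z := hy.trans_le (le_iterate_pinningMap hs hy.le n)
  have hmax : max (log (pinningMap s z)) 0 ≤ s * max (log z) 0 :=
    max_le (log_pinningMap_le hs hz) (by positivity)
  calc ((s : ℝ) ^ (n + 1))⁻¹ * max (log ((pinningMap s)^[n + 1] y)) 0
      = ((s : ℝ) ^ (n + 1))⁻¹ * max (log (pinningMap s z)) 0 := by
        rw [Function.iterate_succ_apply']
    _ ≤ ((s : ℝ) ^ (n + 1))⁻¹ * (s * max (log z) 0) := by gcongr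
    _ = ((s : ℝ) ^ n)⁻¹ * max (log z) 0 := by field_simp; ring

lemma monotone_scaled_log_sub_iterate (hs : 2 ≤ s) (hy : 0 < y) :
    Monotone fun n : ℕ ↦ ((s : ℝ) ^ n)⁻¹ * (log ((pinningMap s)^[n] y) - log s / (s - 1)) := by
  have hs' : (1 : ℝ) < s := by exact_mod_cast hs
  refine monotone_nat_of_le_succ fun n ↦ ?_
  set z := (pinningMap s)^[n] y
  have hz : 0 < z := hy.trans_le (le_iterate_pinningMap (by omega) hy.le n)
  have hfix : s * (log s / (s - 1)) - log s = log s / (s - 1) := by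
    field_simp [(by linarith : (s : ℝ) - 1 ≠ 0)]
    ring
  have hstep : s * (log z - log s / (s - 1)) ≤ log (pinningMap s z) - log s / (s - 1) := by
    linarith [mul_log_sub_log_le_log_pinningMap (s := s) (by omega) hz]
  calc ((s : ℝ) ^ n)⁻¹ * (log z - log s / (s - 1))
      = ((s : ℝ) ^ (n + 1))⁻¹ * (s * (log z - log s / (s - 1))) := by
        field_simp; ring
    _ ≤ ((s : ℝ) ^ (n + 1))⁻¹ * (log (pinningMap s z) - log s / (s - 1)) := by gcongr
    _ = _ := by rw [Function.iterate_succ_apply']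

lemma bddAbove_scaled_log_sub_iterate (hs : 2 ≤ s) (hy : 0 < y) :
    BddAbove (Set.range fun n : ℕ ↦
      ((s : ℝ) ^ n)⁻¹ * (log ((pinningMap s)^[n] y) - log s / (s - 1))) := by
  have hs' : (1 : ℝ) < s := by exact_mod_cast hs
  have hL : 0 ≤ log s / (s - 1) := div_nonneg (log_nonneg hs'.le) (by linarith)
  refine ⟨max (log y) 0, Set.forall_mem_range.2 fun n ↦ ?_⟩
  calc ((s : ℝ) ^ n)⁻¹ * (log ((pinningMap s)^[n] y) - log s / (s - 1))
      ≤ ((s : ℝ) ^ n)⁻¹ * max (log ((pinningMap s)^[n] y)) 0 := by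
        gcongr
        exact (sub_le_self _ hL).trans (le_max_left _ _)
    _ ≤ ((s : ℝ) ^ 0)⁻¹ * max (log ((pinningMap s)^[0] y)) 0 :=
        antitone_scaled_max_log_iterate (by omega) hy (Nat.zero_le n)
    _ = max (log y) 0 := by simp

lemma tendsto_scaled_log_iterate (hs : 2 ≤ s) (hy : 0 < y) :
    Tendsto (fun n : ℕ ↦ ((s : ℝ) ^ n)⁻¹ * log ((pinningMap s)^[n] y)) atTop
      (𝓝 (pinningLimit s y)) := by
  have hs' : (1 : ℝ) < s := by exact_mod_cast hs
  have hsup := tendsto_atTop_ciSup (monotone_scaled_log_sub_iterate hs hy)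
    (bddAbove_scaled_log_sub_iterate hs hy)
  have hcorr : Tendsto (fun n : ℕ ↦ ((s : ℝ) ^ n)⁻¹ * (log s / (s - 1))) atTop (𝓝 0) := by
    simpa using (tendsto_inv_atTop_zero.comp
      (tendsto_pow_atTop_atTop_of_one_lt hs')).mul_const (log s / (s - 1))
  convert hsup.add hcorr using 2 with n
  · ring
  · rw [add_zero, pinningLimit]

lemma pinningLimit_eq_zero (hs : 2 ≤ s) (hy₀ : 0 < y) (hy₁ : y ≤ 1) : pinningLimit s y = 0 := by
  have hs' : (1 : ℝ) < s := by exact_mod_cast hs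
  refine tendsto_nhds_unique (tendsto_scaled_log_iterate hs hy₀) ?_
  have hlow : Tendsto (fun n : ℕ ↦ ((s : ℝ) ^ n)⁻¹ * log y) atTop (𝓝 0) := by
    simpa using (tendsto_inv_atTop_zero.comp
      (tendsto_pow_atTop_atTop_of_one_lt hs')).mul_const (log y)
  refine tendsto_of_tendsto_of_tendsto_of_le_of_le hlow tendsto_const_nhds (fun n ↦ ?_) fun n ↦ ?_
  · dsimp only
    gcongr
    exact le_iterate_pinningMap (by omega) hy₀.le n
  · exact mul_nonpos_of_nonneg_of_nonpos (by positivity)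
      (log_nonpos (hy₀.le.trans (le_iterate_pinningMap (by omega) hy₀.le n))
        (iterate_pinningMap_le_one (by omega) hy₀.le hy₁ n))

lemma pinningLimit_pos (hs : 2 ≤ s) (hy : 1 < y) : 0 < pinningLimit s y := by
  obtain ⟨N, hN⟩ := ((tendsto_iterate_pinningMap_atTop hs hy).eventually_gt_atTop
    (exp (log s / (s - 1)))).exists
  have hN' : log s / (s - 1) < log ((pinningMap s)^[N] y) :=
    (lt_log_iff_exp_lt ((exp_pos _).trans hN)).2 hN
  calc 0 < ((s : ℝ) ^ N)⁻¹ * (log ((pinningMap s)^[N] y) - log s / (s - 1)) := by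
        have : (0 : ℝ) < s := by positivity
        exact mul_pos (by positivity) (by linarith)
    _ ≤ pinningLimit s y :=
        le_ciSup (bddAbove_scaled_log_sub_iterate hs (by linarith)) N

end scaledLog

theorem stmt_8 (s : ℕ) (hs : 2 ≤ s) (r : ℝ → ℕ → ℝ)
    (hr0 : ∀ h, r h 0 = Real.exp h)
    (hrec : ∀ h n, r h (n+1) = (r h n ^ s + s - 1) / s) :
    ∃ F : ℝ → ℝ,
      (∀ h, Filter.Tendsto (fun n : ℕ => ((s : ℝ) ^ n)⁻¹ * Real.log (r h n))
        Filter.atTop (nhds (F h))) ∧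
      (∀ h ≤ 0, F h = 0) ∧ (∀ h > 0, 0 < F h) := by
  have hr : ∀ h n, r h n = (pinningMap s)^[n] (exp h) := by
    intro h n
    induction n with
    | zero => exact hr0 h
    | succ n ih => rw [hrec, ih, Function.iterate_succ_apply', pinningMap]
  simp only [hr]
  refine ⟨fun h ↦ pinningLimit s (exp h), fun h ↦ tendsto_scaled_log_iterate hs (exp_pos h),
    fun h hh ↦ pinningLimit_eq_zero hs (exp_pos h) (exp_le_one_iff.2 hh),
    fun h hh ↦ pinningLimit_pos hs (one_lt_exp_iff.2 hh)⟩
end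

section
/- Let s ≥ 2 be an integer and F the annealed free energy of the hierarchical pinning model with b = s. Then for every α > 0, F(h)/h^α → 0 as h ↓ 0; i.e. F vanishes at the critical point faster than any power of h. -/
open Real Filter Set

theorem stmt_12 (s : ℕ) (hs : 2 ≤ s) (r : ℝ → ℕ → ℝ)
    (hr0 : ∀ h, r h 0 = Real.exp h)
    (hrec : ∀ h n, r h (n+1) = (r h n ^ s + s - 1) / s)
    (F : ℝ → ℝ)
    (hF : ∀ h, Filter.Tendsto (fun n : ℕ => ((s : ℝ) ^ n)⁻¹ * Real.log (r h n))
      Filter.atTop (nhds (F h))) :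
    ∀ α : ℝ, 0 < α →
      Filter.Tendsto (fun h : ℝ => F h / h ^ α) (nhdsWithin 0 (Set.Ioi 0))
        (nhds 0) := by
  intro α hα
  have hs1 : (1:ℝ) < (s:ℝ) := by exact_mod_cast lt_of_lt_of_le one_lt_two hs
  have hs0 : (0:ℝ) < (s:ℝ) := lt_trans one_pos hs1
  have hlogs : 0 < Real.log s := Real.log_pos hs1
  have hlog2 : 0 < Real.log 2 := Real.log_pos one_lt_two
  -- r ≥ 1
  have hr1 : ∀ h : ℝ, 0 ≤ h → ∀ n, 1 ≤ r h n := by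
    intro h hh n
    induction n with
    | zero => rw [hr0]; exact Real.one_le_exp hh
    | succ n ih =>
      rw [hrec, le_div_iff₀ hs0]
      have hp : (1:ℝ) ≤ r h n ^ s := one_le_pow₀ ih
      linarith
  -- F h ≤ each term
  have hFle : ∀ h : ℝ, 0 ≤ h → ∀ n, F h ≤ ((s:ℝ)^n)⁻¹ * Real.log (r h n) := by
    intro h hh n
    have hanti : ∀ m : ℕ, ((s:ℝ)^(m+1))⁻¹ * Real.log (r h (m+1))
        ≤ ((s:ℝ)^m)⁻¹ * Real.log (r h m) := by
      intro m
      have h1 : 1 ≤ r h m := hr1 h hh m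
      have hpow : 1 ≤ r h m ^ s := one_le_pow₀ h1
      have hle : r h (m+1) ≤ r h m ^ s := by
        rw [hrec, div_le_iff₀ hs0]; nlinarith
      have hlog : Real.log (r h (m+1)) ≤ (s:ℝ) * Real.log (r h m) := by
        calc Real.log (r h (m+1)) ≤ Real.log (r h m ^ s) :=
              Real.log_le_log (by linarith [hr1 h hh (m+1)]) hle
          _ = (s:ℝ) * Real.log (r h m) := by rw [Real.log_pow]
      calc ((s:ℝ)^(m+1))⁻¹ * Real.log (r h (m+1))
          ≤ ((s:ℝ)^(m+1))⁻¹ * ((s:ℝ) * Real.log (r h m)) :=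
            mul_le_mul_of_nonneg_left hlog (by positivity)
        _ = ((s:ℝ)^m)⁻¹ * Real.log (r h m) := by
            rw [pow_succ]
            field_simp
    have hA : Antitone (fun n : ℕ => ((s:ℝ)^n)⁻¹ * Real.log (r h n)) :=
      antitone_nat_of_succ_le hanti
    exact le_of_tendsto (hF h) (Filter.eventually_atTop.2 ⟨n, fun m hm => hA hm⟩)
  -- F ≥ 0
  have hF0 : ∀ h : ℝ, 0 ≤ h → 0 ≤ F h := by
    intro h hh
    refine ge_of_tendsto' (hF h) (fun n => ?_)
    exact mul_nonneg (by positivity) (Real.log_nonneg (hr1 h hh n))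
  -- growth bound
  have hgrow : ∀ h : ℝ, 0 ≤ h → ∀ n : ℕ,
      2*(s:ℝ)*(Real.exp h - 1)*n ≤ Real.log 2 →
      r h n - 1 ≤ (Real.exp h - 1) * Real.exp (2*(s:ℝ)*(Real.exp h - 1)*n) := by
    intro h hh
    set x := Real.exp h - 1 with hxdef
    have hx0 : 0 ≤ x := by
      have := Real.one_le_exp hh; simp [hxdef]; linarith
    intro n
    induction n with
    | zero => intro _; simp [hr0, hxdef]
    | succ n ih =>
      intro hcond
      have hsx : 0 ≤ 2*(s:ℝ)*x := by positivity
      have hn1 : (n:ℝ) ≤ ((n+1 : ℕ):ℝ) := by push_cast; linarith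
      have hcondn : 2*(s:ℝ)*x*n ≤ Real.log 2 := by
        have h' : 2*(s:ℝ)*x*n ≤ 2*(s:ℝ)*x*((n+1:ℕ):ℝ) :=
          mul_le_mul_of_nonneg_left hn1 hsx
        linarith
      have ihn := ih hcondn
      have hy0 : 0 ≤ r h n - 1 := by linarith [hr1 h hh n]
      set y := r h n - 1 with hy
      have hexp2 : Real.exp (2*(s:ℝ)*x*n) ≤ 2 := by
        calc Real.exp (2*(s:ℝ)*x*n) ≤ Real.exp (Real.log 2) := Real.exp_le_exp.2 hcondn
          _ = 2 := Real.exp_log two_pos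
      have hy2 : y ≤ 2*x := by
        calc y ≤ x * Real.exp (2*(s:ℝ)*x*n) := ihn
          _ ≤ x * 2 := mul_le_mul_of_nonneg_left hexp2 hx0
          _ = 2*x := by ring
      have hstep : r h (n+1) - 1 = ((1+y)^s - 1)/(s:ℝ) := by
        rw [hrec]
        have : r h n = 1 + y := by rw [hy]; ring
        rw [this]
        field_simp
        ring
      have h1 : (1+y)^s ≤ Real.exp ((s:ℝ)*y) := by
        calc (1+y)^s ≤ (Real.exp y)^s :=
              pow_le_pow_left₀ (by linarith) (by linarith [Real.add_one_le_exp y]) s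
          _ = Real.exp ((s:ℝ)*y) := by rw [← Real.exp_nat_mul]
      have h2 : Real.exp ((s:ℝ)*y) - 1 ≤ ((s:ℝ)*y) * Real.exp ((s:ℝ)*y) := by
        set t := (s:ℝ)*y with ht
        have ha := Real.add_one_le_exp (-t)
        have hb : Real.exp (-t) * Real.exp t = 1 := by
          rw [← Real.exp_add]; simp
        nlinarith [Real.exp_pos t]
      have h3 : r h (n+1) - 1 ≤ y * Real.exp ((s:ℝ)*y) := by
        rw [hstep, div_le_iff₀ hs0]
        calc (1+y)^s - 1 ≤ Real.exp ((s:ℝ)*y) - 1 := by linarith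
          _ ≤ ((s:ℝ)*y) * Real.exp ((s:ℝ)*y) := h2
          _ = y * Real.exp ((s:ℝ)*y) * (s:ℝ) := by ring
      have h4 : Real.exp ((s:ℝ)*y) ≤ Real.exp (2*(s:ℝ)*x) :=
        Real.exp_le_exp.2 (by nlinarith)
      calc r h (n+1) - 1 ≤ y * Real.exp ((s:ℝ)*y) := h3
        _ ≤ (x * Real.exp (2*(s:ℝ)*x*n)) * Real.exp (2*(s:ℝ)*x) :=
            mul_le_mul ihn h4 (Real.exp_pos _).le (by positivity)
        _ = x * Real.exp (2*(s:ℝ)*x*((n+1:ℕ):ℝ)) := by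
            rw [mul_assoc, ← Real.exp_add]
            push_cast
            ring_nf
  -- the constant b
  set c : ℝ := Real.log 2 / (2*(s:ℝ)) with hc
  have hcpos : 0 < c := by positivity
  set b : ℝ := c * Real.log s / 2 with hbdef
  have hbpos : 0 < b := by positivity
  -- key bound
  have key : ∀ h : ℝ, 0 < h → h ≤ 1 → F h ≤ 4*(s:ℝ)*h*Real.exp (-b/h) := by
    intro h h0 h1
    set x := Real.exp h - 1 with hxdef
    have hxpos : 0 < x := by
      have : 1 < Real.exp h := by rw [← Real.exp_zero]; exact Real.exp_lt_exp.2 h0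
      simp [hxdef]; linarith
    have hhx : h ≤ x := by
      have := Real.add_one_le_exp h; simp [hxdef]; linarith
    have hx2h : x ≤ 2*h := by
      have hab : |h| ≤ 1 := by rw [abs_of_pos h0]; exact h1
      have := Real.exp_bound hab (n := 1) one_pos
      simp [Finset.sum_range_one] at this
      rw [abs_le] at this
      rw [abs_of_pos h0] at this
      simp [hxdef]; linarith [this.2]
    set N : ℕ := ⌊c/x⌋₊ with hN
    have hcx0 : 0 ≤ c/x := by positivity
    have hNle : (N:ℝ) ≤ c/x := Nat.floor_le hcx0
    have hNgt : c/x < (N:ℝ) + 1 := Nat.lt_floor_add_one _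
    have hcondN : 2*(s:ℝ)*x*N ≤ Real.log 2 := by
      have h' : 2*(s:ℝ)*x*(N:ℝ) ≤ 2*(s:ℝ)*x*(c/x) :=
        mul_le_mul_of_nonneg_left hNle (by positivity)
      have heq : 2*(s:ℝ)*x*(c/x) = Real.log 2 := by
        rw [hc]; field_simp [hxpos.ne']
      exact le_of_le_of_eq h' heq
    have hxN : r h N - 1 ≤ 2*x := by
      have h' := hgrow h h0.le N hcondN
      have hexp2 : Real.exp (2*(s:ℝ)*x*N) ≤ 2 := by
        calc Real.exp (2*(s:ℝ)*x*N) ≤ Real.exp (Real.log 2) := Real.exp_le_exp.2 hcondN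
          _ = 2 := Real.exp_log two_pos
      calc r h N - 1 ≤ x * Real.exp (2*(s:ℝ)*x*N) := h'
        _ ≤ x * 2 := mul_le_mul_of_nonneg_left hexp2 hxpos.le
        _ = 2*x := by ring
    have hlogN : Real.log (r h N) ≤ 2*x := by
      have := Real.log_le_sub_one_of_pos (show (0:ℝ) < r h N by linarith [hr1 h h0.le N])
      linarith
    -- (s^N)⁻¹ ≤ s * exp (-(c * log s)/x)
    have hsN : ((s:ℝ)^N)⁻¹ ≤ (s:ℝ) * Real.exp (-(c * Real.log s)/x) := by
      have hsNexp : ((s:ℝ)^N : ℝ) = Real.exp ((N:ℝ) * Real.log s) := by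
        rw [Real.exp_nat_mul, Real.exp_log hs0]
      rw [hsNexp, ← Real.exp_neg]
      have harg : -((N:ℝ) * Real.log s) ≤ Real.log s + (-(c * Real.log s)/x) := by
        have hd : -(c * Real.log s)/x = -(c/x) * Real.log s := by
          field_simp
        rw [hd]
        nlinarith [hNgt, hlogs]
      calc Real.exp (-((N:ℝ) * Real.log s)) ≤ Real.exp (Real.log s + (-(c * Real.log s)/x)) :=
            Real.exp_le_exp.2 harg
        _ = (s:ℝ) * Real.exp (-(c * Real.log s)/x) := by
            rw [Real.exp_add, Real.exp_log hs0]
    have hexpmono : Real.exp (-(c * Real.log s)/x) ≤ Real.exp (-b/h) := by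
      apply Real.exp_le_exp.2
      rw [neg_div, neg_div, neg_le_neg_iff]
      have : b/h = (c * Real.log s)/(2*h) := by
        rw [hbdef]; field_simp
      rw [this]
      exact div_le_div_of_nonneg_left (by positivity) hxpos hx2h
    calc F h ≤ ((s:ℝ)^N)⁻¹ * Real.log (r h N) := hFle h h0.le N
      _ ≤ ((s:ℝ)^N)⁻¹ * (2*x) := mul_le_mul_of_nonneg_left hlogN (by positivity)
      _ ≤ ((s:ℝ) * Real.exp (-b/h)) * (2*(2*h)) := by
          apply mul_le_mul (le_trans hsN ?_) (by linarith) (by positivity) (by positivity)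
          exact mul_le_mul_of_nonneg_left hexpmono hs0.le
      _ = 4*(s:ℝ)*h*Real.exp (-b/h) := by ring
  -- final squeeze
  have hG : Filter.Tendsto (fun h : ℝ => 4*(s:ℝ) * ((h⁻¹) ^ (α-1) * Real.exp (-b * h⁻¹)))
      (nhdsWithin 0 (Set.Ioi 0)) (nhds 0) := by
    have h1 := tendsto_rpow_mul_exp_neg_mul_atTop_nhds_zero (α-1) b hbpos
    have h2 := h1.comp tendsto_inv_nhdsGT_zero
    have h3 := h2.const_mul (4*(s:ℝ))
    simpa [Function.comp] using h3
  apply squeeze_zero' ?_ ?_ hG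
  · filter_upwards [self_mem_nhdsWithin] with h hh
    exact div_nonneg (hF0 h (le_of_lt hh)) (Real.rpow_nonneg (le_of_lt hh) α)
  · filter_upwards [Ioo_mem_nhdsGT_of_mem (Set.mem_Ico.2 ⟨le_refl 0, one_pos⟩)] with h hh
    have h0 : 0 < h := hh.1
    have h1 : h ≤ 1 := hh.2.le
    have hk := key h h0 h1
    have hpow : (0:ℝ) < h ^ α := Real.rpow_pos_of_pos h0 α
    rw [div_le_iff₀ hpow]
    have hid : (h⁻¹) ^ (α-1) * h ^ α = h := by
      rw [Real.inv_rpow h0.le, ← Real.rpow_neg h0.le, ← Real.rpow_add h0]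
      simp
    have hexpid : Real.exp (-b * h⁻¹) = Real.exp (-b/h) := by
      rw [div_eq_mul_inv, neg_mul]
    calc F h ≤ 4*(s:ℝ)*h*Real.exp (-b/h) := hk
      _ = 4*(s:ℝ) * ((h⁻¹) ^ (α-1) * Real.exp (-b * h⁻¹)) * h ^ α := by
          rw [hexpid]
          rw [show 4*(s:ℝ) * ((h⁻¹) ^ (α-1) * Real.exp (-b/h)) * h ^ α
              = 4*(s:ℝ) * Real.exp (-b/h) * ((h⁻¹) ^ (α-1) * h ^ α) by ring, hid]
          ring
end

section
/- Let s ≥ 2 be an integer, define q_0 = 0, q_{n+1} = (q_n^s + s - 1)/s, and for k < n set p_{k,n} = ∏_{j=k}^{n-1} q_j^{s-1}. Then log p_{k,n} / (2 log(k/n)) → 1 as k → ∞, uniformly over n > k; equivalently, log p_{k,n} ∼ 2 log(k/n). -/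
/-! With `e n = 1 - q n` the recursion reads `e (n+1) = e n - e n ^ 2 * G(q n) / s`, where
`G(x) = ∑_{i<s} ∑_{j<i} x ^ j` is continuous with `G(1) = s (s - 1) / 2`. Since `q n → 1`, the
increments of `1 / e n` tend to `(s - 1) / 2`, so by Cesàro `e n ∼ 2 / ((s - 1) n)`. Hence
`-log (q j ^ (s - 1)) ∼ (s - 1) e j ∼ 2 / j ∼ 2 (log (j + 1) - log j)`, and summing an asymptotic
equivalence of eventually positive terms over `[k, n)` gives `log p_{k,n} ∼ 2 log (k / n)`,
uniformly in `n > k` as `k → ∞`. -/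

open Filter Finset Asymptotics Topology

lemma Real.isEquivalent_log_sub_one : Real.log ~[𝓝 1] fun x => x - 1 := by
  refine (Real.hasDerivAt_log one_ne_zero).isLittleO.congr_left fun x => ?_
  simp

lemma tendsto_nat_mul_of_tendsto_sub_div_sq {x : ℕ → ℝ} {B : ℝ} (hB : B ≠ 0)
    (hx : ∀ n, 0 < x n) (hx0 : Tendsto x atTop (𝓝 0))
    (hd : Tendsto (fun n => (x n - x (n + 1)) / x n ^ 2) atTop (𝓝 B)) :
    Tendsto (fun n : ℕ => n * x n) atTop (𝓝 B⁻¹) := by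
  have hratio : Tendsto (fun n => x (n + 1) / x n) atTop (𝓝 1) := by
    have := tendsto_const_nhds (x := (1 : ℝ)).sub (hx0.mul hd)
    rw [zero_mul, sub_zero] at this
    refine this.congr fun n => ?_
    have := (hx n).ne'
    field_simp
    ring
  have hstep : Tendsto (fun n => 1 / x (n + 1) - 1 / x n) atTop (𝓝 B) := by
    have := hd.div hratio one_ne_zero
    rw [div_one] at this
    refine this.congr fun n => ?_
    have := (hx n).ne'
    have := (hx (n + 1)).ne'
    simp only [Pi.div_apply]
    field_simp
  have hmean : Tendsto (fun n : ℕ => (n : ℝ)⁻¹ * (1 / x n)) atTop (𝓝 B) := by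
    have h := ((tendsto_inv_atTop_zero.comp tendsto_natCast_atTop_atTop).mul_const
      (1 / x 0)).add hstep.cesaro
    rw [zero_mul, zero_add] at h
    refine h.congr fun n => ?_
    simp only [Function.comp_apply, sum_range_sub (fun i => 1 / x i)]
    ring
  simpa [mul_comm] using hmean.inv₀ hB

lemma eventually_abs_sum_Ico_div_sum_Ico_sub_one_lt {u v : ℕ → ℝ} (huv : u ~[atTop] v)
    (hv : ∀ᶠ j in atTop, 0 < v j) {ε : ℝ} (hε : 0 < ε) :
    ∀ᶠ k in atTop, ∀ n > k, |(∑ j ∈ Ico k n, u j) / (∑ j ∈ Ico k n, v j) - 1| < ε := by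
  obtain ⟨N, hN⟩ := eventually_atTop.1 ((huv.isLittleO.def (half_pos hε)).and hv)
  filter_upwards [eventually_ge_atTop N] with k hk n hn
  have hvj : ∀ j ∈ Ico k n, |u j - v j| ≤ ε / 2 * v j ∧ 0 < v j := fun j hj => by
    obtain ⟨h, hpos⟩ := hN j (hk.trans (mem_Ico.1 hj).1)
    simpa [abs_of_pos hpos] using And.intro h hpos
  have hsum : 0 < ∑ j ∈ Ico k n, v j :=
    sum_pos (fun j hj => (hvj j hj).2) (nonempty_Ico.2 hn)
  have herr : |∑ j ∈ Ico k n, u j - ∑ j ∈ Ico k n, v j| ≤ ε / 2 * ∑ j ∈ Ico k n, v j := by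
    rw [← sum_sub_distrib, mul_sum]
    exact (abs_sum_le_sum_abs _ _).trans (sum_le_sum fun j hj => (hvj j hj).1)
  rw [div_sub_one hsum.ne', abs_div, abs_of_pos hsum, div_lt_iff₀ hsum]
  linarith [mul_lt_mul_of_pos_right (half_lt_self hε) hsum]

noncomputable def doubleGeomSum {R : Type*} [Semiring R] (s : ℕ) (x : R) : R :=
  ∑ i ∈ range s, ∑ j ∈ range i, x ^ j

lemma pow_eq_one_add_mul_sub_one_add_sq_mul_doubleGeomSum {R : Type*} [CommRing R] (s : ℕ)
    (x : R) :
    x ^ s = 1 + s * (x - 1) + (x - 1) ^ 2 * doubleGeomSum s x := by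
  have h : ∑ i ∈ range s, x ^ i = s + (x - 1) * doubleGeomSum s x := by
    calc ∑ i ∈ range s, x ^ i = ∑ i ∈ range s, (1 + (x - 1) * ∑ j ∈ range i, x ^ j) :=
          sum_congr rfl fun i _ => by linear_combination -(geom_sum_mul x i)
      _ = s + (x - 1) * doubleGeomSum s x := by
          simp [sum_add_distrib, mul_sum, doubleGeomSum]
  linear_combination (-(geom_sum_mul x s)) + (x - 1) * h

lemma one_le_doubleGeomSum {R : Type*} [Semiring R] [PartialOrder R] [IsOrderedRing R]
    {s : ℕ} (hs : 2 ≤ s) {x : R} (hx : 0 ≤ x) : 1 ≤ doubleGeomSum s x := by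
  have h := single_le_sum (f := fun i => ∑ j ∈ range i, x ^ j)
    (fun i _ => sum_nonneg fun j _ => pow_nonneg hx j) (mem_range.2 hs)
  simpa [doubleGeomSum] using h

lemma doubleGeomSum_one (s : ℕ) : doubleGeomSum s (1 : ℝ) = s * (s - 1) / 2 := by
  have h := congrArg (Nat.cast (R := ℝ)) (sum_range_id_mul_two s)
  rcases s with _ | s
  · simp [doubleGeomSum]
  · push_cast at h
    simp only [doubleGeomSum, one_pow, sum_const, card_range, nsmul_eq_mul, mul_one]
    push_cast
    linarith

lemma continuous_doubleGeomSum {R : Type*} [Semiring R] [TopologicalSpace R]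
    [IsTopologicalSemiring R] (s : ℕ) : Continuous (doubleGeomSum (R := R) s) := by
  unfold doubleGeomSum
  fun_prop

namespace HierarchicalWalk

variable {s : ℕ} {q : ℕ → ℝ}

lemma succ_eq (hs : 2 ≤ s) (hqrec : ∀ n, q (n + 1) = (q n ^ s + s - 1) / s) (n : ℕ) :
    q (n + 1) = q n + (1 - q n) ^ 2 * doubleGeomSum s (q n) / s := by
  have : (s : ℝ) ≠ 0 := by positivity
  rw [hqrec, pow_eq_one_add_mul_sub_one_add_sq_mul_doubleGeomSum]
  field_simp
  ring

lemma le_succ_of_nonneg (hs : 2 ≤ s) (hqrec : ∀ n, q (n + 1) = (q n ^ s + s - 1) / s) {n : ℕ}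
    (hn : 0 ≤ q n) : q n ≤ q (n + 1) := by
  have := one_le_doubleGeomSum hs hn
  have : 0 ≤ (1 - q n) ^ 2 * doubleGeomSum s (q n) / s := by positivity
  linarith [succ_eq hs hqrec n]

lemma nonneg_and_lt_one (hs : 2 ≤ s) (hq0 : q 0 = 0)
    (hqrec : ∀ n, q (n + 1) = (q n ^ s + s - 1) / s) (n : ℕ) : 0 ≤ q n ∧ q n < 1 := by
  induction n with
  | zero => simp [hq0]
  | succ n ih =>
    refine ⟨ih.1.trans (le_succ_of_nonneg hs hqrec ih.1), ?_⟩
    rw [hqrec, div_lt_one (by positivity)]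
    linarith [pow_lt_one₀ ih.1 ih.2 (n := s) (by omega)]

lemma monotone (hs : 2 ≤ s) (hq0 : q 0 = 0)
    (hqrec : ∀ n, q (n + 1) = (q n ^ s + s - 1) / s) : Monotone q :=
  monotone_nat_of_le_succ fun n => le_succ_of_nonneg hs hqrec (nonneg_and_lt_one hs hq0 hqrec n).1

/-- The limit `L` of the increasing sequence `q` is a fixed point of the recursion, which forces
`(1 - L) ^ 2 * G(L) = 0` while `G(L) ≥ 1`. -/
lemma tendsto_one (hs : 2 ≤ s) (hq0 : q 0 = 0)
    (hqrec : ∀ n, q (n + 1) = (q n ^ s + s - 1) / s) : Tendsto q atTop (𝓝 1) := by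
  have hbdd := nonneg_and_lt_one hs hq0 hqrec
  have hL := tendsto_atTop_ciSup (monotone hs hq0 hqrec)
    ⟨1, Set.forall_mem_range.2 fun n => (hbdd n).2.le⟩
  set L := ⨆ n, q n
  have hL0 : 0 ≤ L := hq0 ▸ le_ciSup ⟨1, Set.forall_mem_range.2 fun n => (hbdd n).2.le⟩ 0
  set φ : ℝ → ℝ := fun y => y + (1 - y) ^ 2 * doubleGeomSum s y / s
  have hφ : Continuous φ := by
    have := continuous_doubleGeomSum (R := ℝ) s
    fun_prop
  have hfix : φ L = L := by
    refine tendsto_nhds_unique ((hφ.tendsto L).comp hL) ?_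
    refine (hL.comp (tendsto_add_atTop_nat 1)).congr fun n => ?_
    simp [φ, succ_eq hs hqrec]
  have hG := one_le_doubleGeomSum hs hL0
  have : (s : ℝ) ≠ 0 := by positivity
  have : (1 - L) ^ 2 = 0 := by
    simp only [φ, add_eq_left, div_eq_zero_iff, mul_eq_zero] at hfix
    grind
  rwa [show L = 1 by nlinarith] at hL

lemma tendsto_mul_one_sub (hs : 2 ≤ s) (hq0 : q 0 = 0)
    (hqrec : ∀ n, q (n + 1) = (q n ^ s + s - 1) / s) :
    Tendsto (fun n : ℕ => n * (1 - q n)) atTop (𝓝 (2 / ((s : ℝ) - 1))) := by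
  have hs1 : (1 : ℝ) < s := by exact_mod_cast hs
  have hq1 := tendsto_one hs hq0 hqrec
  have hB : doubleGeomSum s (1 : ℝ) / s = (s - 1) / 2 := by
    rw [doubleGeomSum_one]
    field_simp
  have hd : Tendsto (fun n => ((1 - q n) - (1 - q (n + 1))) / (1 - q n) ^ 2) atTop
      (𝓝 (((s : ℝ) - 1) / 2)) := by
    rw [← hB]
    refine (((continuous_doubleGeomSum s).tendsto 1).comp hq1).div_const _ |>.congr fun n => ?_
    have : 1 - q n ≠ 0 := (sub_pos.2 (nonneg_and_lt_one hs hq0 hqrec n).2).ne'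
    simp only [Function.comp_apply, succ_eq hs hqrec n]
    field_simp
    ring
  have := tendsto_nat_mul_of_tendsto_sub_div_sq (by linarith)
    (fun n => sub_pos.2 (nonneg_and_lt_one hs hq0 hqrec n).2)
    (by simpa using (tendsto_const_nhds (x := (1 : ℝ))).sub hq1) hd
  rwa [inv_div] at this

lemma isEquivalent_neg_log_pow (hs : 2 ≤ s) (hq0 : q 0 = 0)
    (hqrec : ∀ n, q (n + 1) = (q n ^ s + s - 1) / s) :
    (fun j => -Real.log (q j ^ (s - 1))) ~[atTop]
      fun j : ℕ => 2 * (Real.log (j + 1) - Real.log j) := by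
  have hs1 : (1 : ℝ) < s := by exact_mod_cast hs
  have hlog : (fun j => -Real.log (q j)) ~[atTop] fun j => 1 - q j := by
    simpa using (Real.isEquivalent_log_sub_one.comp_tendsto (tendsto_one hs hq0 hqrec)).neg
  have hq : (fun j => ((s : ℝ) - 1) * (1 - q j)) ~[atTop] fun j : ℕ => 2 * (1 / (j : ℝ)) := by
    refine isEquivalent_of_tendsto_one ?_
    have := ((tendsto_mul_one_sub hs hq0 hqrec).const_mul ((s : ℝ) - 1)).div_const 2
    rw [mul_div_cancel₀ _ (by linarith : (s : ℝ) - 1 ≠ 0), div_self two_ne_zero] at this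
    refine this.congr' ?_
    filter_upwards [eventually_ne_atTop 0] with j hj
    simp only [Pi.div_apply]
    field_simp
  have hharm : (fun j : ℕ => Real.log (j + 1) - Real.log j) ~[atTop]
      fun j : ℕ => 1 / (j : ℝ) := by
    have h1 : Tendsto (fun j : ℕ => 1 + 1 / (j : ℝ)) atTop (𝓝 1) := by
      simpa using tendsto_one_div_atTop_nhds_zero_nat.const_add (1 : ℝ)
    refine (Real.isEquivalent_log_sub_one.comp_tendsto h1).congr_left ?_ |>.congr_right ?_
    · filter_upwards [eventually_ne_atTop 0] with j hj
      rw [Function.comp_apply, ← Real.log_div (by positivity) (by positivity)]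
      congr 1
      field_simp
    · exact Eventually.of_forall fun j => by simp
  refine ((IsEquivalent.refl.mul hlog).trans hq |>.trans (IsEquivalent.refl.mul hharm).symm)
    |>.congr_left (Eventually.of_forall fun j => ?_)
  simp [Real.log_pow, Nat.cast_sub (by omega : 1 ≤ s)]

end HierarchicalWalk

open HierarchicalWalk in
theorem stmt_13 (s : ℕ) (hs : 2 ≤ s) (q : ℕ → ℝ)
    (hq0 : q 0 = 0) (hqrec : ∀ n, q (n+1) = (q n ^ s + s - 1) / s) :
    ∀ ε > (0:ℝ), ∃ K : ℕ, ∀ k ≥ K, ∀ n > k,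
      |Real.log (∏ j ∈ Finset.Ico k n, q j ^ (s - 1)) /
        (2 * Real.log ((k : ℝ) / n)) - 1| < ε := by
  intro ε hε
  have hv : ∀ᶠ j : ℕ in atTop, 0 < 2 * (Real.log (j + 1) - Real.log j) := by
    filter_upwards [eventually_gt_atTop 0] with j hj
    have : Real.log j < Real.log (j + 1) := Real.log_lt_log (by positivity) (by linarith)
    linarith
  have hpos : ∀ᶠ k in atTop, ∀ j ≥ k, 0 < q j := by
    exact eventually_forall_ge_atTop.2
      ((tendsto_one hs hq0 hqrec).eventually (lt_mem_nhds one_pos))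
  obtain ⟨K, hK⟩ := eventually_atTop.1 ((eventually_abs_sum_Ico_div_sum_Ico_sub_one_lt
    (isEquivalent_neg_log_pow hs hq0 hqrec) hv hε).and (hpos.and (eventually_gt_atTop 0)))
  refine ⟨K, fun k hk n hn => ?_⟩
  obtain ⟨hratio, hqk, hk0⟩ := hK k hk
  convert hratio n hn using 3
  have htel : ∑ j ∈ Ico k n, (Real.log (j + 1) - Real.log j) = Real.log n - Real.log k := by
    simpa using sum_Ico_sub (fun j : ℕ => Real.log j) hn.le
  rw [Real.log_prod fun j hj => pow_ne_zero _ (hqk j (mem_Ico.1 hj).1).ne', ← mul_sum, htel,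
    Real.log_div (Nat.cast_pos.2 hk0).ne' (Nat.cast_pos.2 (hk0.trans hn)).ne', sum_neg_distrib,
    ← neg_div_neg_eq]
  ring
end

section
/- Let s ≥ 2 be an integer, q_0 = 0, q_{n+1} = (q_n^s + s - 1)/s. Then ∑_{j=0}^{∞} (1 - q_j) = ∞, and consequently ∏_{j=k}^{n-1} q_j^{s-1} → 0 as n → ∞ for every fixed k. -/
/-!
Write `e n = 1 - q n`, so that `e (n+1) = (1 - (1 - e n) ^ s) / s`. The second-order Bernoulli bound
gives `e (n+1) ≥ e n - (s-1)/2 · e n ^ 2`, and since `e (n+1) ≤ 1/s` this makes `1 / e` grow by at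
most `s - 1` per step. Hence `e (n+1) ≥ 1 / (s (n+1))`, and `∑ e` diverges like the harmonic series.
The products then vanish because `q ^ (s-1) ≤ q ≤ exp (-(1 - q))`.
-/

open Filter Finset Topology

theorem one_sub_pow_le {y : ℝ} (hy0 : 0 ≤ y) (hy1 : y ≤ 1) (n : ℕ) :
    (1 - y) ^ n ≤ 1 - n * y + n * (n - 1) / 2 * y ^ 2 := by
  induction n with
  | zero => simp
  | succ n ih =>
    calc (1 - y) ^ (n + 1) = (1 - y) * (1 - y) ^ n := pow_succ' _ _
      _ ≤ (1 - y) * (1 - n * y + n * (n - 1) / 2 * y ^ 2) :=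
        mul_le_mul_of_nonneg_left ih (by linarith)
      _ ≤ 1 - ↑(n + 1) * y + ↑(n + 1) * (↑(n + 1) - 1) / 2 * y ^ 2 := by
        have hn : 0 ≤ (n : ℝ) * (n - 1) := by
          rcases n with _ | n
          · simp
          · push_cast; ring_nf; positivity
        push_cast
        nlinarith [mul_nonneg hn (pow_nonneg hy0 3)]

theorem inv_le_inv_add_of_sub_mul_sq_le {c e e' : ℝ} (he : 0 < e) (hc : 0 ≤ c)
    (hce : c * e ≤ 1 / 2) (h : e - c * e ^ 2 ≤ e') : e'⁻¹ ≤ e⁻¹ + 2 * c := by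
  have hpos : 0 < e * (1 - c * e) := mul_pos he (by linarith)
  calc e'⁻¹ ≤ (e * (1 - c * e))⁻¹ := inv_anti₀ hpos (by linarith)
    _ ≤ e⁻¹ + 2 * c := by
      rw [inv_le_iff_one_le_mul₀ hpos, add_mul, inv_mul_cancel_left₀ he.ne']
      nlinarith [mul_nonneg hc he.le]

theorem tendsto_sum_range_atTop_of_div_succ_le {f : ℕ → ℝ} {c : ℝ} (hc : 0 < c)
    (hf : ∀ n : ℕ, c / (n + 1) ≤ f n) :
    Tendsto (fun n ↦ ∑ j ∈ range n, f j) atTop atTop := by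
  refine tendsto_atTop_mono (fun n ↦ ?_)
    (Real.tendsto_sum_range_one_div_nat_succ_atTop.const_mul_atTop hc)
  rw [mul_sum]
  exact sum_le_sum fun j _ ↦ by rw [← div_eq_mul_one_div]; exact hf j

theorem tendsto_prod_Ico_nhds_zero {a : ℕ → ℝ} (ha : ∀ j, 0 ≤ a j)
    (h : Tendsto (fun n ↦ ∑ j ∈ range n, (1 - a j)) atTop atTop) (k : ℕ) :
    Tendsto (fun n ↦ ∏ j ∈ Ico k n, a j) atTop (𝓝 0) := by
  have htail : Tendsto (fun n ↦ ∑ j ∈ Ico k n, (1 - a j)) atTop atTop := by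
    refine (tendsto_atTop_add_const_right _ (-∑ j ∈ range k, (1 - a j)) h).congr' ?_
    filter_upwards [eventually_ge_atTop k] with n hn
    rw [sum_Ico_eq_sub _ hn, sub_eq_add_neg]
  refine squeeze_zero (fun n ↦ prod_nonneg fun j _ ↦ ha j) (fun n ↦ ?_)
    (Real.tendsto_exp_atBot.comp (tendsto_neg_atTop_atBot.comp htail))
  calc ∏ j ∈ Ico k n, a j ≤ ∏ j ∈ Ico k n, Real.exp (-(1 - a j)) :=
        prod_le_prod (fun j _ ↦ ha j) fun j _ ↦ by linarith [Real.add_one_le_exp (-(1 - a j))]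
    _ = Real.exp (-∑ j ∈ Ico k n, (1 - a j)) := by rw [← Real.exp_sum, sum_neg_distrib]

namespace PowRec

variable {s : ℕ} {q : ℕ → ℝ}

theorem nonneg_lt_one (hs : 2 ≤ s) (hq0 : q 0 = 0)
    (hqrec : ∀ n, q (n + 1) = (q n ^ s + s - 1) / s) (n : ℕ) : 0 ≤ q n ∧ q n < 1 := by
  have hsR : (2 : ℝ) ≤ s := by exact_mod_cast hs
  induction n with
  | zero => simp [hq0]
  | succ n ih =>
    have hpow : q n ^ s < 1 := pow_lt_one₀ ih.1 ih.2 (by omega)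
    rw [hqrec, div_lt_one (by linarith)]
    exact ⟨div_nonneg (by linarith [pow_nonneg ih.1 s]) (by linarith), by linarith⟩

theorem one_sub_succ (hs : s ≠ 0) (hqrec : ∀ n, q (n + 1) = (q n ^ s + s - 1) / s) (n : ℕ) :
    1 - q (n + 1) = (1 - q n ^ s) / s := by
  have : (s : ℝ) ≠ 0 := by positivity
  rw [hqrec]
  field_simp
  ring

variable (hs : 2 ≤ s) (hq0 : q 0 = 0) (hqrec : ∀ n, q (n + 1) = (q n ^ s + s - 1) / s)
include hs hq0 hqrec

theorem one_sub_succ_le (n : ℕ) : 1 - q (n + 1) ≤ 1 / s := by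
  rw [one_sub_succ (by omega) hqrec]
  gcongr
  linarith [pow_nonneg (nonneg_lt_one hs hq0 hqrec n).1 s]

theorem one_sub_sub_le_one_sub_succ (n : ℕ) :
    (1 - q n) - (s - 1) / 2 * (1 - q n) ^ 2 ≤ 1 - q (n + 1) := by
  obtain ⟨h0, h1⟩ := nonneg_lt_one hs hq0 hqrec n
  have hbern := one_sub_pow_le (y := 1 - q n) (by linarith) (by linarith) s
  rw [sub_sub_cancel] at hbern
  rw [one_sub_succ (by omega) hqrec, le_div_iff₀ (by positivity)]
  nlinarith

theorem inv_one_sub_succ_le (n : ℕ) : (1 - q (n + 1))⁻¹ ≤ s * (n + 1) := by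
  have hsR : (2 : ℝ) ≤ s := by exact_mod_cast hs
  induction n with
  | zero =>
    rw [one_sub_succ (by omega) hqrec, hq0, zero_pow (by omega)]
    simp
  | succ n ih =>
    have he : 0 < 1 - q (n + 1) := by linarith [(nonneg_lt_one hs hq0 hqrec (n + 1)).2]
    have hce : (s - 1) / 2 * (1 - q (n + 1)) ≤ 1 / 2 := by
      have := one_sub_succ_le hs hq0 hqrec n
      rw [le_div_iff₀ (by positivity)] at this
      nlinarith
    have hstep := inv_le_inv_add_of_sub_mul_sq_le he (by linarith) hce
      (one_sub_sub_le_one_sub_succ hs hq0 hqrec (n + 1))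
    push_cast
    linarith

theorem tendsto_sum_one_sub :
    Tendsto (fun n ↦ ∑ j ∈ range n, (1 - q j)) atTop atTop := by
  rw [← tendsto_add_atTop_iff_nat 1]
  have hpos : ∀ n, 0 < 1 - q n := fun n ↦ by linarith [(nonneg_lt_one hs hq0 hqrec n).2]
  have hshift := tendsto_sum_range_atTop_of_div_succ_le (f := fun j ↦ 1 - q (j + 1))
    (c := 1 / s) (by positivity) fun n ↦ by
      rw [div_div, ← inv_eq_one_div]
      exact inv_le_of_inv_le₀ (hpos _) (inv_one_sub_succ_le hs hq0 hqrec n)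
  refine (tendsto_atTop_add_const_left _ (1 - q 0) hshift).congr fun n ↦ ?_
  rw [sum_range_succ']
  ring

end PowRec

theorem stmt_14 (s : ℕ) (hs : 2 ≤ s) (q : ℕ → ℝ)
    (hq0 : q 0 = 0) (hqrec : ∀ n, q (n+1) = (q n ^ s + s - 1) / s) :
    Filter.Tendsto (fun n : ℕ => ∑ j ∈ Finset.range n, (1 - q j))
      Filter.atTop Filter.atTop ∧
    ∀ k : ℕ, Filter.Tendsto (fun n : ℕ => ∏ j ∈ Finset.Ico k n, q j ^ (s - 1))
      Filter.atTop (nhds 0) := by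
  have hdiv := PowRec.tendsto_sum_one_sub hs hq0 hqrec
  refine ⟨hdiv, tendsto_prod_Ico_nhds_zero (fun j ↦ pow_nonneg ?_ _) ?_⟩
  · exact (PowRec.nonneg_lt_one hs hq0 hqrec j).1
  refine tendsto_atTop_mono (fun n ↦ sum_le_sum fun j _ ↦ ?_) hdiv
  obtain ⟨h0, h1⟩ := PowRec.nonneg_lt_one hs hq0 hqrec j
  have : q j ^ (s - 1) ≤ q j := pow_le_of_le_one h0 h1.le (by omega)
  linarith
end

section
/- Let s ≥ 2 be an integer. For h ∈ ℝ define r_n(h) by r_0 = e^h, r_{n+1} = (r_n^s + s - 1)/s. The map h ↦ s^{-n} log r_n(h) is convex and non-decreasing in h for every n. -/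
lemma aux_convex_log_exp_add (c : ℝ) (hc : 0 ≤ c) :
    ConvexOn ℝ Set.univ (fun x : ℝ => Real.log (Real.exp x + c)) := by
  have hpos : ∀ x : ℝ, 0 < Real.exp x + c := fun x => by positivity
  have hF' : ∀ x : ℝ, HasDerivAt (fun x : ℝ => Real.log (Real.exp x + c))
      (Real.exp x / (Real.exp x + c)) x := fun x =>
    ((Real.hasDerivAt_exp x).add_const c).log (hpos x).ne'
  have hd1 : deriv (fun x : ℝ => Real.log (Real.exp x + c))
      = fun x => Real.exp x / (Real.exp x + c) := funext fun x => (hF' x).deriv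
  have hG : ∀ x : ℝ, HasDerivAt (fun x => Real.exp x / (Real.exp x + c))
      ((Real.exp x * (Real.exp x + c) - Real.exp x * Real.exp x) / (Real.exp x + c) ^ 2) x :=
    fun x => (Real.hasDerivAt_exp x).div ((Real.hasDerivAt_exp x).add_const c) (hpos x).ne'
  apply convexOn_univ_of_deriv2_nonneg
  · exact fun x => (hF' x).differentiableAt
  · rw [hd1]; exact fun x => (hG x).differentiableAt
  · intro x
    have : (deriv^[2] (fun x : ℝ => Real.log (Real.exp x + c))) x
        = deriv (deriv (fun x : ℝ => Real.log (Real.exp x + c))) x := by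
      simp [Function.iterate_succ, Function.comp]
    rw [this, hd1, (hG x).deriv]
    apply div_nonneg _ (by positivity)
    nlinarith [Real.exp_pos x, (Real.exp_pos x).le]

theorem stmt_17 (s : ℕ) (hs : 2 ≤ s) (r : ℝ → ℕ → ℝ)
    (hr0 : ∀ h, r h 0 = Real.exp h)
    (hrec : ∀ h n, r h (n+1) = (r h n ^ s + s - 1) / s) :
    ∀ n : ℕ,
      ConvexOn ℝ Set.univ (fun h : ℝ => ((s : ℝ) ^ n)⁻¹ * Real.log (r h n)) ∧
      Monotone (fun h : ℝ => ((s : ℝ) ^ n)⁻¹ * Real.log (r h n)) := by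
  have h2 : (2:ℝ) ≤ (s:ℝ) := by exact_mod_cast hs
  have hs0 : (0:ℝ) < (s:ℝ) := by linarith
  have hpos : ∀ h n, 0 < r h n := by
    intro h n
    induction n with
    | zero => rw [hr0]; exact Real.exp_pos h
    | succ n ih =>
      rw [hrec]
      have hp : 0 < r h n ^ s := pow_pos ih s
      have : 0 < r h n ^ s + (s:ℝ) - 1 := by linarith
      positivity
  have hnum : ∀ h n, 0 < r h n ^ s + (s:ℝ) - 1 := by
    intro h n
    have hp : 0 < r h n ^ s := pow_pos (hpos h n) s
    linarith
  set c : ℝ := (s:ℝ) - 1 with hcdef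
  have hc0 : 0 ≤ c := by simp only [hcdef]; linarith
  have key : ∀ n, ConvexOn ℝ Set.univ (fun h : ℝ => Real.log (r h n)) ∧
      Monotone (fun h : ℝ => Real.log (r h n)) := by
    intro n
    induction n with
    | zero =>
      simp only [hr0, Real.log_exp]
      exact ⟨convexOn_id convex_univ, monotone_id⟩
    | succ n ih =>
      obtain ⟨hcv, hm⟩ := ih
      have hexp : ∀ h, Real.exp ((s:ℝ) * Real.log (r h n)) = r h n ^ s := by
        intro h
        rw [Real.exp_nat_mul, Real.exp_log (hpos h n)]
      have keyeq : ∀ h, Real.log (r h (n+1)) =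
          Real.log (Real.exp ((s:ℝ) * Real.log (r h n)) + c) - Real.log s := by
        intro h
        rw [hrec, Real.log_div (hnum h n).ne' hs0.ne']
        congr 2
        rw [hexp h, hcdef]; ring
      have hF := aux_convex_log_exp_add c hc0
      have hFmono : Monotone (fun x : ℝ => Real.log (Real.exp x + c)) := by
        intro a b hab
        exact Real.log_le_log (by positivity)
          (add_le_add (Real.exp_le_exp.2 hab) le_rfl)
      constructor
      · refine ⟨convex_univ, ?_⟩
        intro x _ y _ a b ha hb hab
        simp only [keyeq, smul_eq_mul]
        have h1 : Real.log (r (a * x + b * y) n) ≤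
            a * Real.log (r x n) + b * Real.log (r y n) := by
          have := hcv.2 (Set.mem_univ x) (Set.mem_univ y) ha hb hab
          simpa using this
        have h2' : (s:ℝ) * Real.log (r (a * x + b * y) n) ≤
            a * ((s:ℝ) * Real.log (r x n)) + b * ((s:ℝ) * Real.log (r y n)) := by
          nlinarith [mul_le_mul_of_nonneg_left h1 hs0.le]
        have h3 := hFmono h2'
        have h4 : Real.log (Real.exp (a * ((s:ℝ) * Real.log (r x n)) +
              b * ((s:ℝ) * Real.log (r y n))) + c) ≤
            a * Real.log (Real.exp ((s:ℝ) * Real.log (r x n)) + c) +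
            b * Real.log (Real.exp ((s:ℝ) * Real.log (r y n)) + c) := by
          have := hF.2 (Set.mem_univ ((s:ℝ) * Real.log (r x n)))
            (Set.mem_univ ((s:ℝ) * Real.log (r y n))) ha hb hab
          simpa using this
        have h5 : a * Real.log s + b * Real.log s = Real.log s := by
          rw [← add_mul, hab, one_mul]
        nlinarith [h3, h4]
      · intro a b hab
        simp only [keyeq]
        have : (s:ℝ) * Real.log (r a n) ≤ (s:ℝ) * Real.log (r b n) :=
          mul_le_mul_of_nonneg_left (hm hab) hs0.le
        exact sub_le_sub_right (hFmono this) _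
  intro n
  obtain ⟨hcv, hm⟩ := key n
  have hk : (0:ℝ) ≤ ((s:ℝ) ^ n)⁻¹ := by positivity
  constructor
  · have := hcv.smul hk
    simpa [Pi.smul_apply, smul_eq_mul] using this
  · intro a b hab
    exact mul_le_mul_of_nonneg_left (hm hab) hk
end

section
/- Let s ≥ 2 and let F̂(ε) := F(log(1+ε)) be the annealed free energy in the variable ε = e^h - 1. Define a_0 = a with F̂(a) = 1 and (1+a_{n+1})^s = s a_n + 1. Then F̂(a_n) = s^{-n} for all n ≥ 0. -/
theorem stmt_18 (s : ℕ) (hs : 2 ≤ s) (r : ℝ → ℕ → ℝ)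
    (hr0 : ∀ h, r h 0 = Real.exp h)
    (hrec : ∀ h n, r h (n+1) = (r h n ^ s + s - 1) / s)
    (F : ℝ → ℝ)
    (hF : ∀ h, Filter.Tendsto (fun n : ℕ => ((s : ℝ) ^ n)⁻¹ * Real.log (r h n))
      Filter.atTop (nhds (F h)))
    (a : ℕ → ℝ) (hapos : ∀ n, 0 < a n)
    (ha0 : F (Real.log (1 + a 0)) = 1)
    (harec : ∀ n, (1 + a (n+1)) ^ s = (s : ℝ) * a n + 1) :
    ∀ n : ℕ, F (Real.log (1 + a n)) = ((s : ℝ) ^ n)⁻¹ := by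
  have hs0 : (0:ℝ) < (s:ℝ) := by positivity
  -- key: shifting by one step divides F by s
  have key : ∀ n, F (Real.log (1 + a (n+1))) = (s:ℝ)⁻¹ * F (Real.log (1 + a n)) := by
    intro n
    set h := Real.log (1 + a n) with hh
    set h' := Real.log (1 + a (n+1)) with hh'
    have hpos : (0:ℝ) < 1 + a n := by linarith [hapos n]
    have hpos' : (0:ℝ) < 1 + a (n+1) := by linarith [hapos (n+1)]
    have e1 : Real.exp h' = 1 + a (n+1) := Real.exp_log hpos'
    have e0 : Real.exp h = 1 + a n := Real.exp_log hpos
    have shift : ∀ k, r h' (k+1) = r h k := by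
      intro k
      induction k with
      | zero =>
        rw [hrec, hr0, hr0, e1, e0, harec n]
        field_simp
        ring
      | succ k ih => rw [hrec, ih, hrec]
    have t1 : Filter.Tendsto (fun k : ℕ => ((s : ℝ) ^ (k+1))⁻¹ * Real.log (r h' (k+1)))
        Filter.atTop (nhds (F h')) :=
      (hF h').comp (Filter.tendsto_add_atTop_nat 1)
    have t2 : Filter.Tendsto (fun k : ℕ => ((s : ℝ) ^ (k+1))⁻¹ * Real.log (r h' (k+1)))
        Filter.atTop (nhds ((s:ℝ)⁻¹ * F h)) := by
      have : (fun k : ℕ => ((s : ℝ) ^ (k+1))⁻¹ * Real.log (r h' (k+1)))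
          = fun k : ℕ => (s:ℝ)⁻¹ * (((s : ℝ) ^ k)⁻¹ * Real.log (r h k)) := by
        funext k
        rw [shift k, pow_succ, mul_inv]
        ring
      rw [this]
      exact (hF h).const_mul _
    exact tendsto_nhds_unique t1 t2
  intro n
  induction n with
  | zero => simpa using ha0
  | succ n ih =>
    rw [key n, ih, pow_succ, mul_inv, mul_comm]
end
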